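/- The union of the increasing chain of subgroups W₀ ⊆ W₁ ⊆ W₂ ⊆ ⋯ of R × R equals the kernel of d₁: ⋃_{K ≥ 0} W_K = ker d₁. -/

import Mathlib

/-- The formal inverse of a word over `{x, y}` (with `x = true`, `y = false`):
reverse the word and interchange the two letters. -/
def winv (w : FreeMonoid Bool) : FreeMonoid Bool :=
  FreeMonoid.ofList ((FreeMonoid.toList w).reverse.map Bool.not)

/-- The defining relations of the free monogenic inverse monoid. -/
inductive FIMRel1 : FreeMonoid Bool → FreeMonoid Bool → Prop
  | idem (w : FreeMonoid Bool) : FIMRel1 (w * winv w * w) w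
  | comm (w z : FreeMonoid Bool) :
      FIMRel1 (w * winv w * (z * winv z)) (z * winv z * (w * winv w))

/-- The free monogenic inverse monoid. -/
abbrev FIM1 := (conGen FIMRel1).Quotient

/-- The generator `x` of the free monogenic inverse monoid. -/
def mx : FIM1 := (conGen FIMRel1).mk' (FreeMonoid.of true)

/-- The (generalized) inverse `y` of the generator. -/
def my : FIM1 := (conGen FIMRel1).mk' (FreeMonoid.of false)

/-- The monoid algebra `ℤM` of the free monogenic inverse monoid. -/
abbrev R : Type := MonoidAlgebra ℤ FIM1

/-- The image of the generator `x` in `ℤM`. -/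
noncomputable def Xg : R := MonoidAlgebra.of ℤ FIM1 mx

/-- The image of `y` in `ℤM`. -/
noncomputable def Yg : R := MonoidAlgebra.of ℤ FIM1 my

/-- The left `R`-linear map `R × R → R` with `(1,0) ↦ x - 1` and `(0,1) ↦ y - 1`. -/
noncomputable def d1 : (R × R) →ₗ[R] R where
  toFun p := p.1 * (Xg - 1) + p.2 * (Yg - 1)
  map_add' p q := by
    simp only [Prod.fst_add, Prod.snd_add, add_mul]
    abel
  map_smul' r p := by
    simp only [Prod.smul_fst, Prod.smul_snd, smul_eq_mul, RingHom.id_apply, mul_add, mul_assoc]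

/-- `m·e_x := (m, 0)` in `R × R`. -/
noncomputable def ex (r : R) : R × R := (r, 0)

/-- `m·e_y := (0, m)` in `R × R`. -/
noncomputable def ey (r : R) : R × R := (0, r)

/-- `c₁(n,k) := xⁿy^{k−1}·e_y + xⁿyᵏ·e_x` (for `0 < k ≤ n`). -/
noncomputable def c1 (n k : ℕ) : R × R :=
  ey (Xg ^ n * Yg ^ (k - 1)) + ex (Xg ^ n * Yg ^ k)

/-- `c₂(n,k,j) := xⁿyᵏx^{j−1}·e_x + xⁿyᵏxʲ·e_y` (for `0 ≤ n < k`, `0 < j ≤ k`). -/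
noncomputable def c2 (n k j : ℕ) : R × R :=
  ex (Xg ^ n * Yg ^ k * Xg ^ (j - 1)) + ey (Xg ^ n * Yg ^ k * Xg ^ j)

/-- `β(n,k) := Σ_{i<k} xⁿyⁱ·e_y + Σ_{j<k} xⁿyᵏxʲ·e_x + xⁿyᵏxᵏ·e_x − xⁿ·e_x
  − Σ_{i≤k} x^{n+1}yⁱ·e_y − Σ_{j≤k} x^{n+1}y^{k+1}xʲ·e_x` (for `0 ≤ n < k`). -/
noncomputable def beta (n k : ℕ) : R × R :=
  (∑ i ∈ Finset.range k, ey (Xg ^ n * Yg ^ i)) +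
  (∑ j ∈ Finset.range k, ex (Xg ^ n * Yg ^ k * Xg ^ j)) +
  ex (Xg ^ n * Yg ^ k * Xg ^ k) - ex (Xg ^ n) -
  (∑ i ∈ Finset.range (k + 1), ey (Xg ^ (n + 1) * Yg ^ i)) -
  (∑ j ∈ Finset.range (k + 1), ex (Xg ^ (n + 1) * Yg ^ (k + 1) * Xg ^ j))

/-- `W_K`: the ℤ-span of all `c₁(n,k)`, all `c₂(n,k,j)` and the `β(n,k)` with `k ≤ K`. -/
noncomputable def W (K : ℕ) : Submodule ℤ (R × R) :=
  Submodule.span ℤ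
    ({v | ∃ n k, 0 < k ∧ k ≤ n ∧ v = c1 n k} ∪
     {v | ∃ n k j, n < k ∧ 0 < j ∧ j ≤ k ∧ v = c2 n k j} ∪
     {v | ∃ n k, n < k ∧ k ≤ K ∧ v = beta n k})


/-- Model of the free monogenic inverse monoid: triples (lo, hi, en). -/
@[ext]
structure T : Type where
  lo : ℤ
  hi : ℤ
  en : ℤ
  lo_nonpos : lo ≤ 0
  hi_nonneg : 0 ≤ hi
  lo_le_en : lo ≤ en
  en_le_hi : en ≤ hi

instance : One T := ⟨⟨0, 0, 0, le_refl _, le_refl _, le_refl _, le_refl _⟩⟩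

instance : Mul T :=
  ⟨fun s t => ⟨min s.lo (s.en + t.lo), max s.hi (s.en + t.hi), s.en + t.en,
    le_trans (min_le_left _ _) s.lo_nonpos,
    le_trans s.hi_nonneg (le_max_left _ _),
    le_trans (min_le_right _ _) (by have := t.lo_le_en; omega),
    le_trans (by have := t.en_le_hi; omega) (le_max_right _ _)⟩⟩

@[simp] lemma T.mul_lo (s t : T) : (s * t).lo = min s.lo (s.en + t.lo) := rfl
@[simp] lemma T.mul_hi (s t : T) : (s * t).hi = max s.hi (s.en + t.hi) := rfl
@[simp] lemma T.mul_en (s t : T) : (s * t).en = s.en + t.en := rfl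
@[simp] lemma T.one_lo : (1 : T).lo = 0 := rfl
@[simp] lemma T.one_hi : (1 : T).hi = 0 := rfl
@[simp] lemma T.one_en : (1 : T).en = 0 := rfl

instance : Monoid T where
  mul_assoc a b c := by ext <;> simp <;> omega
  one_mul a := by ext <;> simp [a.lo_nonpos, a.hi_nonneg]
  mul_one a := by ext <;> simp [a.lo_le_en, a.en_le_hi]

def xT : T := ⟨0, 1, 1, le_refl _, zero_le_one, zero_le_one, le_refl _⟩
def yT : T := ⟨-1, 0, -1, by norm_num, le_refl _, le_refl _, by norm_num⟩

/-- The evaluation homomorphism from the free monoid to `T`. -/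
def phi : FreeMonoid Bool →* T := FreeMonoid.lift (fun b => if b then xT else yT)

/-- Formal inversion on `T`. -/
def invT (t : T) : T :=
  ⟨t.lo - t.en, t.hi - t.en, -t.en, by have := t.lo_le_en; omega,
   by have := t.en_le_hi; omega, by have := t.lo_nonpos; omega,
   by have := t.hi_nonneg; omega⟩

@[simp] lemma invT_lo (t : T) : (invT t).lo = t.lo - t.en := rfl
@[simp] lemma invT_hi (t : T) : (invT t).hi = t.hi - t.en := rfl
@[simp] lemma invT_en (t : T) : (invT t).en = -t.en := rfl

lemma invT_mul (s t : T) : invT (s * t) = invT t * invT s := by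
  ext <;> simp [invT] <;> omega

@[simp] lemma invT_one : invT 1 = 1 := by ext <;> simp [invT]

@[simp] lemma winv_one : winv 1 = 1 := rfl

lemma winv_of (b : Bool) : winv (FreeMonoid.of b) = FreeMonoid.of (!b) := rfl

lemma winv_mul (u v : FreeMonoid Bool) : winv (u * v) = winv v * winv u := by
  simp only [winv]
  change FreeMonoid.ofList (((FreeMonoid.toList u) ++ (FreeMonoid.toList v)).reverse.map Bool.not) = _
  rw [List.reverse_append, List.map_append]
  rfl

@[simp] lemma phi_of (b : Bool) : phi (FreeMonoid.of b) = if b then xT else yT := by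
  simp [phi]

lemma phi_winv (w : FreeMonoid Bool) : phi (winv w) = invT (phi w) := by
  induction w using FreeMonoid.recOn with
  | one => simp
  | of_mul b w ihh =>
      rw [winv_mul, map_mul, map_mul, ihh, invT_mul, winv_of, phi_of, phi_of]
      cases b <;> simp <;> ext <;> simp [invT, xT, yT]

lemma phi_rel {u v : FreeMonoid Bool} (h : FIMRel1 u v) : phi u = phi v := by
  cases h with
  | idem w =>
      have h1 := (phi v).lo_le_en
      have h2 := (phi v).en_le_hi
      simp only [map_mul, phi_winv]
      ext <;> simp <;> omega
  | comm w z =>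
      simp only [map_mul, phi_winv]
      ext <;> simp <;> omega

/-- The induced homomorphism `FIM1 →* T`. -/
def normT : FIM1 →* T :=
  Con.lift _ phi (by
    intro a b h
    induction h with
    | of u v h => exact phi_rel h
    | refl => rfl
    | symm _ ih => exact ih.symm
    | trans _ _ ih1 ih2 => exact ih1.trans ih2
    | mul _ _ ih1 ih2 =>
        simp only [Con.ker_rel] at *
        rw [map_mul, map_mul, ih1, ih2])

@[simp] lemma normT_mx : normT mx = xT := rfl
@[simp] lemma normT_my : normT my = yT := rfl

/-! ### Identities in `FIM1` -/

def qm : FreeMonoid Bool →* FIM1 := (conGen FIMRel1).mk'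

lemma q_rel {u v : FreeMonoid Bool} (h : FIMRel1 u v) : qm u = qm v :=
  (Con.eq _).2 (ConGen.Rel.of u v h)

lemma qm_true : qm (FreeMonoid.of true) = mx := rfl
lemma qm_false : qm (FreeMonoid.of false) = my := rfl

lemma winv_pow_of (b : Bool) (n : ℕ) :
    winv ((FreeMonoid.of b) ^ n) = (FreeMonoid.of (!b)) ^ n := by
  induction n with
  | zero => simp
  | succ n ih => rw [pow_succ, winv_mul, ih, winv_of, pow_succ']

lemma fim_idem (w : FreeMonoid Bool) : qm w * qm (winv w) * qm w = qm w := by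
  have := q_rel (FIMRel1.idem w)
  simpa [map_mul] using this

lemma fim_comm (w z : FreeMonoid Bool) :
    qm w * qm (winv w) * (qm z * qm (winv z)) = qm z * qm (winv z) * (qm w * qm (winv w)) := by
  have := q_rel (FIMRel1.comm w z)
  simpa [map_mul] using this

lemma fim_en (n : ℕ) : mx ^ n * my ^ n * mx ^ n = mx ^ n := by
  have := fim_idem ((FreeMonoid.of true) ^ n)
  rwa [winv_pow_of, map_pow, map_pow, qm_true, Bool.not_true, qm_false] at this

lemma fim_en' (n : ℕ) : my ^ n * mx ^ n * my ^ n = my ^ n := by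
  have := fim_idem ((FreeMonoid.of false) ^ n)
  rwa [winv_pow_of, map_pow, map_pow, qm_false, Bool.not_false, qm_true] at this

lemma fim_swap (n m : ℕ) :
    mx ^ n * my ^ n * (my ^ m * mx ^ m) = my ^ m * mx ^ m * (mx ^ n * my ^ n) := by
  have := fim_comm ((FreeMonoid.of true) ^ n) ((FreeMonoid.of false) ^ m)
  rwa [winv_pow_of, winv_pow_of, map_pow, map_pow, map_pow, map_pow, qm_true, qm_false,
    Bool.not_true, Bool.not_false, qm_true, qm_false] at this

/-- Continuation form of `fim_swap`. -/
lemma fim_swapR (n m : ℕ) (r : FIM1) :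
    mx ^ n * (my ^ n * (my ^ m * (mx ^ m * r))) = my ^ m * (mx ^ m * (mx ^ n * (my ^ n * r))) := by
  have h := fim_swap n m
  calc mx ^ n * (my ^ n * (my ^ m * (mx ^ m * r)))
      = (mx ^ n * my ^ n * (my ^ m * mx ^ m)) * r := by simp [mul_assoc]
    _ = (my ^ m * mx ^ m * (mx ^ n * my ^ n)) * r := by rw [h]
    _ = my ^ m * (mx ^ m * (mx ^ n * (my ^ n * r))) := by simp [mul_assoc]

/-- Continuation form of `fim_en`. -/
lemma fim_enR (n : ℕ) (r : FIM1) :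
    mx ^ n * (my ^ n * (mx ^ n * r)) = mx ^ n * r := by
  calc mx ^ n * (my ^ n * (mx ^ n * r)) = (mx ^ n * my ^ n * mx ^ n) * r := by simp [mul_assoc]
    _ = mx ^ n * r := by rw [fim_en]

lemma fim_enR' (n : ℕ) (r : FIM1) :
    my ^ n * (mx ^ n * (my ^ n * r)) = my ^ n * r := by
  calc my ^ n * (mx ^ n * (my ^ n * r)) = (my ^ n * mx ^ n * my ^ n) * r := by simp [mul_assoc]
    _ = my ^ n * r := by rw [fim_en']

/-- `x^(j+1) y^(j+1) x = x^(j+1) y^j`. -/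
lemma fim_M1core (j : ℕ) : mx ^ (j+1) * my ^ (j+1) * mx = mx ^ (j+1) * my ^ j := by
  have h := fim_swapR j 1 (1 : FIM1)
  calc mx ^ (j+1) * my ^ (j+1) * mx
      = mx * (mx ^ j * (my ^ j * (my ^ 1 * (mx ^ 1 * 1)))) := by
        rw [pow_succ' mx, pow_succ my]; simp [mul_assoc]
    _ = mx * (my ^ 1 * (mx ^ 1 * (mx ^ j * (my ^ j * 1)))) := by rw [fim_swapR]
    _ = (mx * my * mx) * (mx ^ j * my ^ j) := by simp [mul_assoc]
    _ = mx * (mx ^ j * my ^ j) := by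
        have := fim_en 1
        simp only [pow_one] at this
        rw [this]
    _ = mx ^ (j+1) * my ^ j := by rw [pow_succ' mx]; simp [mul_assoc]

lemma fim_swap' (n m : ℕ) :
    my ^ n * mx ^ n * (mx ^ m * my ^ m) = mx ^ m * my ^ m * (my ^ n * mx ^ n) := by
  have := fim_comm ((FreeMonoid.of false) ^ n) ((FreeMonoid.of true) ^ m)
  rwa [winv_pow_of, winv_pow_of, map_pow, map_pow, map_pow, map_pow, qm_true, qm_false,
    Bool.not_true, Bool.not_false, qm_true, qm_false] at this

lemma fim_swapR' (n m : ℕ) (r : FIM1) :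
    my ^ n * (mx ^ n * (mx ^ m * (my ^ m * r))) = mx ^ m * (my ^ m * (my ^ n * (mx ^ n * r))) := by
  have h := fim_swap' n m
  calc my ^ n * (mx ^ n * (mx ^ m * (my ^ m * r)))
      = (my ^ n * mx ^ n * (mx ^ m * my ^ m)) * r := by simp [mul_assoc]
    _ = (mx ^ m * my ^ m * (my ^ n * mx ^ n)) * r := by rw [h]
    _ = mx ^ m * (my ^ m * (my ^ n * (mx ^ n * r))) := by simp [mul_assoc]

/-- `y^(j+1) x^(j+1) y = y^(j+1) x^j`. -/
lemma fim_M2core (j : ℕ) : my ^ (j+1) * mx ^ (j+1) * my = my ^ (j+1) * mx ^ j := by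
  have h := fim_swapR 1 j (1 : FIM1)
  calc my ^ (j+1) * mx ^ (j+1) * my
      = my * (my ^ j * (mx ^ j * (mx ^ 1 * (my ^ 1 * 1)))) := by
        rw [pow_succ' my, pow_succ mx]; simp [mul_assoc]
    _ = my * (mx ^ 1 * (my ^ 1 * (my ^ j * (mx ^ j * 1)))) := by rw [fim_swapR']
    _ = (my * mx * my) * (my ^ j * mx ^ j) := by simp [mul_assoc]
    _ = my * (my ^ j * mx ^ j) := by
        have := fim_en' 1
        simp only [pow_one] at this
        rw [this]
    _ = my ^ (j+1) * mx ^ j := by rw [pow_succ' my]; simp [mul_assoc]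

/-- (M1) `xⁿ yᵏ x = xⁿ y^(k-1)` for `1 ≤ k ≤ n`. -/
lemma fim_M1 (n k : ℕ) (h1 : 1 ≤ k) (h2 : k ≤ n) :
    mx ^ n * my ^ k * mx = mx ^ n * my ^ (k - 1) := by
  obtain ⟨j, rfl⟩ : ∃ j, k = j + 1 := ⟨k - 1, by omega⟩
  obtain ⟨m, rfl⟩ : ∃ m, n = m + (j + 1) := ⟨n - (j+1), by omega⟩
  have core := fim_M1core j
  calc mx ^ (m + (j+1)) * my ^ (j+1) * mx
      = mx ^ m * (mx ^ (j+1) * my ^ (j+1) * mx) := by rw [pow_add]; simp [mul_assoc]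
    _ = mx ^ m * (mx ^ (j+1) * my ^ j) := by rw [core]
    _ = mx ^ (m + (j+1)) * my ^ (j + 1 - 1) := by simp [pow_add, pow_succ, mul_assoc]

/-- (M4) `xʰ yʰ xʲ = xʰ y^(h-j)` for `j ≤ h`. -/
lemma fim_M4 (h j : ℕ) (hj : j ≤ h) :
    mx ^ h * my ^ h * mx ^ j = mx ^ h * my ^ (h - j) := by
  induction j with
  | zero => simp
  | succ j ih =>
      have hj' : j ≤ h := by omega
      calc mx ^ h * my ^ h * mx ^ (j+1)
          = (mx ^ h * my ^ h * mx ^ j) * mx := by simp [pow_succ, mul_assoc]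
        _ = mx ^ h * my ^ (h - j) * mx := by rw [ih hj']
        _ = mx ^ h * my ^ (h - j - 1) := fim_M1 h (h - j) (by omega) (by omega)
        _ = mx ^ h * my ^ (h - (j+1)) := by rw [Nat.sub_sub]

/-- (M2) `xⁿ yᵏ x^(i+1) y = xⁿ yᵏ xⁱ` for `i + 1 ≤ k`. -/
lemma fim_M2 (n k i : ℕ) (h : i + 1 ≤ k) :
    mx ^ n * my ^ k * mx ^ (i+1) * my = mx ^ n * my ^ k * mx ^ i := by
  have hk : k = (k - (i+1)) + (i+1) := by omega
  have core := fim_M2core i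
  calc mx ^ n * my ^ k * mx ^ (i+1) * my
      = mx ^ n * my ^ (k - (i+1)) * (my ^ (i+1) * mx ^ (i+1) * my) := by
        rw [hk, pow_add]; simp [mul_assoc]
    _ = mx ^ n * my ^ (k - (i+1)) * (my ^ (i+1) * mx ^ i) := by rw [core]
    _ = mx ^ n * my ^ k * mx ^ i := by
        conv_rhs => rw [hk]
        simp [pow_add, pow_succ, mul_assoc]

/-- (M3) `xᵃ y^(a+d) x^(a+d+1) = x^(a+1) y^(a+d+1) x^(a+d+1)`. -/
lemma fim_M3 (a d : ℕ) :
    mx ^ a * my ^ (a+d) * mx ^ (a+d+1) = mx ^ (a+1) * my ^ (a+d+1) * mx ^ (a+d+1) := by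
  have l1 : mx ^ a * my ^ (a+d) * mx ^ (a+d+1)
      = my ^ d * (mx ^ d * (mx ^ a * mx)) := by
    calc mx ^ a * my ^ (a+d) * mx ^ (a+d+1)
        = mx ^ a * (my ^ a * (my ^ d * (mx ^ d * (mx ^ a * mx)))) := by
          have e1 : my ^ (a+d) = my ^ a * my ^ d := by rw [← pow_add]
          have e2 : mx ^ (a+d+1) = mx ^ d * (mx ^ a * mx) := by
            rw [← pow_succ, ← pow_add]; congr 1; omega
          rw [e1, e2]; simp [mul_assoc]
      _ = my ^ d * (mx ^ d * (mx ^ a * (my ^ a * (mx ^ a * mx)))) := by rw [fim_swapR]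
      _ = my ^ d * (mx ^ d * (mx ^ a * mx)) := by rw [fim_enR]
  have l2 : mx ^ (a+1) * my ^ (a+d+1) * mx ^ (a+d+1)
      = my ^ d * (mx ^ d * (mx ^ a * mx)) := by
    calc mx ^ (a+1) * my ^ (a+d+1) * mx ^ (a+d+1)
        = mx ^ (a+1) * (my ^ (a+1) * (my ^ d * (mx ^ d * (mx ^ (a+1) * 1)))) := by
          have e1 : my ^ (a+d+1) = my ^ (a+1) * my ^ d := by rw [← pow_add]; congr 1; omega
          have e2 : mx ^ (a+d+1) = mx ^ d * mx ^ (a+1) := by rw [← pow_add]; congr 1; omega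
          rw [e1, e2]; simp [mul_assoc]
      _ = my ^ d * (mx ^ d * (mx ^ (a+1) * (my ^ (a+1) * (mx ^ (a+1) * 1)))) := by rw [fim_swapR]
      _ = my ^ d * (mx ^ d * (mx ^ (a+1) * 1)) := by rw [fim_enR]
      _ = my ^ d * (mx ^ d * (mx ^ a * mx)) := by rw [mul_one, pow_succ]
  rw [l1, l2]

/-! ### The normal form section `T → FIM1` -/

def aT (t : T) : ℕ := t.hi.toNat
def bT (t : T) : ℕ := (t.hi - t.lo).toNat
def cT (t : T) : ℕ := (t.en - t.lo).toNat

/-- The canonical word `x^a y^b x^c` for a triple. -/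
def sg (t : T) : FIM1 := mx ^ aT t * my ^ bT t * mx ^ cT t

lemma xT_pow (n : ℕ) : xT ^ n =
    ⟨0, n, n, le_refl 0, Int.natCast_nonneg n, Int.natCast_nonneg n, le_refl _⟩ := by
  induction n with
  | zero => ext <;> simp
  | succ n ih => rw [pow_succ, ih]; ext <;> simp [xT] <;> push_cast <;> omega

lemma yT_pow (n : ℕ) : yT ^ n =
    ⟨-n, 0, -n, by omega, le_refl 0, le_refl _, by omega⟩ := by
  induction n with
  | zero => ext <;> simp
  | succ n ih => rw [pow_succ, ih]; ext <;> simp [yT] <;> push_cast <;> omega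

lemma norm_sg (t : T) : normT (sg t) = t := by
  have h1 := t.lo_nonpos; have h2 := t.hi_nonneg
  have h3 := t.lo_le_en; have h4 := t.en_le_hi
  rw [sg, map_mul, map_mul, map_pow, map_pow, map_pow, normT_mx, normT_my,
    xT_pow, yT_pow, xT_pow]
  ext <;> simp [aT, bT, cT] <;> omega

lemma sg_mul_mx (t : T) : sg t * mx = sg (t * xT) := by
  have h1 := t.lo_nonpos; have h2 := t.hi_nonneg
  have h3 := t.lo_le_en; have h4 := t.en_le_hi
  have hab : aT t ≤ bT t := by simp [aT, bT]; omega
  have hcb : cT t ≤ bT t := by simp [bT, cT]; omega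
  by_cases hc : t.en < t.hi
  · have ea : aT (t * xT) = aT t := by simp [aT, xT]; omega
    have eb : bT (t * xT) = bT t := by simp [bT, xT]; omega
    have ec : cT (t * xT) = cT t + 1 := by simp [cT, xT]; omega
    rw [sg, sg, ea, eb, ec, pow_succ]
    simp [mul_assoc]
  · have he : t.en = t.hi := by omega
    have hcb' : cT t = bT t := by simp [bT, cT]; omega
    have ea : aT (t * xT) = aT t + 1 := by simp [aT, xT]; omega
    have eb : bT (t * xT) = bT t + 1 := by simp [bT, xT, he]; omega
    have ec : cT (t * xT) = bT t + 1 := by simp [cT, bT, xT, he]; omega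
    rw [sg, sg, ea, eb, ec, hcb']
    obtain ⟨d, hd⟩ : ∃ d, bT t = aT t + d := ⟨bT t - aT t, by omega⟩
    have := fim_M3 (aT t) d
    rw [hd]
    calc mx ^ aT t * my ^ (aT t + d) * mx ^ (aT t + d) * mx
        = mx ^ aT t * my ^ (aT t + d) * mx ^ (aT t + d + 1) := by
          simp [pow_succ, mul_assoc]
      _ = mx ^ (aT t + 1) * my ^ (aT t + d + 1) * mx ^ (aT t + d + 1) := this

lemma sg_mul_my (t : T) : sg t * my = sg (t * yT) := by
  have h1 := t.lo_nonpos; have h2 := t.hi_nonneg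
  have h3 := t.lo_le_en; have h4 := t.en_le_hi
  have hcb : cT t ≤ bT t := by simp [bT, cT]; omega
  by_cases hc : t.lo < t.en
  · have ea : aT (t * yT) = aT t := by simp [aT, yT]; omega
    have eb : bT (t * yT) = bT t := by simp [bT, yT]; omega
    have ec : cT (t * yT) = cT t - 1 := by simp [cT, yT]; omega
    have hc1 : 1 ≤ cT t := by simp [cT]; omega
    rw [sg, sg, ea, eb, ec]
    obtain ⟨i, hi⟩ : ∃ i, cT t = i + 1 := ⟨cT t - 1, by omega⟩
    rw [hi, show i + 1 - 1 = i from rfl]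
    exact fim_M2 (aT t) (bT t) i (by omega)
  · have he : t.en = t.lo := by omega
    have hc0 : cT t = 0 := by simp [cT]; omega
    have ea : aT (t * yT) = aT t := by simp [aT, yT]; omega
    have eb : bT (t * yT) = bT t + 1 := by simp [bT, yT]; omega
    have ec : cT (t * yT) = 0 := by simp [cT, yT]; omega
    rw [sg, sg, ea, eb, ec, hc0]
    simp [pow_succ, mul_assoc]

lemma normT_qm (w : FreeMonoid Bool) : normT (qm w) = phi w := rfl

lemma sg_one : sg 1 = 1 := by simp [sg, aT, bT, cT]

lemma sg_phi (w : FreeMonoid Bool) : sg (phi w) = qm w := by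
  have key : ∀ l : List Bool, sg (phi (FreeMonoid.ofList l)) = qm (FreeMonoid.ofList l) := by
    intro l
    induction l using List.reverseRecOn with
    | nil =>
        have : FreeMonoid.ofList ([] : List Bool) = 1 := rfl
        rw [this, map_one, map_one, sg_one]
    | append_singleton l b ihh =>
        have hsplit : FreeMonoid.ofList (l ++ [b]) = FreeMonoid.ofList l * FreeMonoid.of b := rfl
        rw [hsplit, map_mul, map_mul]
        cases b
        · rw [phi_of]
          simp only [Bool.false_eq_true, if_false]
          rw [← sg_mul_my, ihh, qm_false]
        · rw [phi_of]
          simp only [if_true]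
          rw [← sg_mul_mx, ihh, qm_true]
  have := key w.toList
  simpa using this

/-- Normal form: `sg ∘ normT = id`. -/
lemma sg_norm (m : FIM1) : sg (normT m) = m := by
  induction m using Con.induction_on with
  | H w => exact sg_phi w

/-! ### Identities in the monoid algebra `R` -/

noncomputable def ofR : FIM1 →* R := MonoidAlgebra.of ℤ FIM1

lemma ofR_mx : ofR mx = Xg := rfl
lemma ofR_my : ofR my = Yg := rfl

lemma ofR_pows (n k j : ℕ) : ofR (mx ^ n * my ^ k * mx ^ j) = Xg ^ n * Yg ^ k * Xg ^ j := by
  rw [map_mul, map_mul, map_pow, map_pow, map_pow, ofR_mx, ofR_my]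

lemma Rid1 (n k : ℕ) (h1 : 1 ≤ k) (h2 : k ≤ n) :
    Xg ^ n * Yg ^ k * Xg = Xg ^ n * Yg ^ (k - 1) := by
  have := congrArg ofR (fim_M1 n k h1 h2)
  simpa [map_mul, map_pow, ofR_mx, ofR_my] using this

lemma Rid2 (n k i : ℕ) (h : i + 1 ≤ k) :
    Xg ^ n * Yg ^ k * Xg ^ (i+1) * Yg = Xg ^ n * Yg ^ k * Xg ^ i := by
  have := congrArg ofR (fim_M2 n k i h)
  simpa [map_mul, map_pow, ofR_mx, ofR_my] using this

lemma Rid3 (a d : ℕ) :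
    Xg ^ a * Yg ^ (a+d) * Xg ^ (a+d+1) = Xg ^ (a+1) * Yg ^ (a+d+1) * Xg ^ (a+d+1) := by
  have := congrArg ofR (fim_M3 a d)
  simpa [map_mul, map_pow, ofR_mx, ofR_my] using this

lemma Rid4 (h j : ℕ) (hj : j ≤ h) :
    Xg ^ h * Yg ^ h * Xg ^ j = Xg ^ h * Yg ^ (h - j) := by
  have := congrArg ofR (fim_M4 h j hj)
  simpa [map_mul, map_pow, ofR_mx, ofR_my] using this

lemma d1_apply (v : R × R) : d1 v = v.1 * (Xg - 1) + v.2 * (Yg - 1) := rfl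

lemma d1_ex (r : R) : d1 (ex r) = r * Xg - r := by
  rw [d1_apply]; simp [ex, mul_sub]

lemma d1_ey (r : R) : d1 (ey r) = r * Yg - r := by
  rw [d1_apply]; simp [ey, mul_sub]

lemma pow_mul_Xg (n k j : ℕ) :
    Xg ^ n * Yg ^ k * Xg ^ j * Xg = Xg ^ n * Yg ^ k * Xg ^ (j+1) := by
  rw [pow_succ]; simp [mul_assoc]

lemma pow_mul_Yg (n k : ℕ) : Xg ^ n * Yg ^ k * Yg = Xg ^ n * Yg ^ (k+1) := by
  rw [pow_succ]; simp [mul_assoc]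

/-- `d₁` kills `c₁ n k` for `0 < k ≤ n`. -/
lemma d1_c1 (n k : ℕ) (h1 : 0 < k) (h2 : k ≤ n) : d1 (c1 n k) = 0 := by
  rw [c1, map_add, d1_ey, d1_ex, pow_mul_Yg]
  rw [show k - 1 + 1 = k by omega, Rid1 n k h1 h2]
  abel

/-- `d₁` kills `c₂ n k j` for `0 < j ≤ k`. -/
lemma d1_c2 (n k j : ℕ) (h1 : 0 < j) (h2 : j ≤ k) : d1 (c2 n k j) = 0 := by
  obtain ⟨i, rfl⟩ : ∃ i, j = i + 1 := ⟨j - 1, by omega⟩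
  rw [c2, map_add, d1_ex, d1_ey, pow_mul_Xg,
    show i + 1 - 1 = i from rfl, Rid2 n k i h2]
  abel

/-- `d₁` kills `beta n k` for `n ≤ k`. -/
lemma d1_beta (n k : ℕ) (h : n ≤ k) : d1 (beta n k) = 0 := by
  obtain ⟨d, rfl⟩ : ∃ d, k = n + d := ⟨k - n, by omega⟩
  have T1 : ∀ (m : ℕ) (r : R), d1 (∑ i ∈ Finset.range m, ey (r * Yg ^ i)) =
      r * Yg ^ m - r := by
    intro m r
    rw [map_sum]
    have : ∀ i, d1 (ey (r * Yg ^ i)) = r * Yg ^ (i+1) - r * Yg ^ i := by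
      intro i; rw [d1_ey, mul_assoc, ← pow_succ]
    simp only [this]
    rw [Finset.sum_range_sub (fun i => r * Yg ^ i)]
    simp
  have T2 : ∀ (m : ℕ) (r : R), d1 (∑ j ∈ Finset.range m, ex (r * Xg ^ j)) =
      r * Xg ^ m - r := by
    intro m r
    rw [map_sum]
    have : ∀ j, d1 (ex (r * Xg ^ j)) = r * Xg ^ (j+1) - r * Xg ^ j := by
      intro j; rw [d1_ex, mul_assoc, ← pow_succ]
    simp only [this]
    rw [Finset.sum_range_sub (fun j => r * Xg ^ j)]
    simp
  have e1 : ∀ (a b : ℕ) (i : ℕ), ey (Xg ^ a * Yg ^ i) = ey (Xg ^ a * Yg ^ i) := fun _ _ _ => rfl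
  rw [beta, map_sub, map_sub, map_sub, map_add, map_add, d1_ex, d1_ex, T1, T1, T2, T2,
    pow_mul_Xg]
  have er : Xg ^ n * Yg ^ (n + d) * Xg ^ (n + d + 1) =
      Xg ^ (n + 1) * Yg ^ (n + d + 1) * Xg ^ (n + d + 1) := Rid3 n d
  rw [er, show Xg ^ n * Xg = Xg ^ (n+1) by rw [pow_succ]]
  abel

/-! ### The union submodule and generator memberships -/

noncomputable def NN : Submodule ℤ (R × R) := ⨆ K, W K

lemma W_mono : Monotone W := by
  intro K K' hK
  apply Submodule.span_mono
  intro v hv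
  rcases hv with (h | h) | h
  · exact Or.inl (Or.inl h)
  · exact Or.inl (Or.inr h)
  · obtain ⟨n, k, hnk, hkK, rfl⟩ := h
    exact Or.inr ⟨n, k, hnk, le_trans hkK hK, rfl⟩

lemma mem_c1 (n k : ℕ) (h1 : 0 < k) (h2 : k ≤ n) : c1 n k ∈ NN := by
  refine le_iSup W 0 ?_
  exact Submodule.subset_span (Or.inl (Or.inl ⟨n, k, h1, h2, rfl⟩))

lemma mem_c2 (n k j : ℕ) (h1 : n < k) (h2 : 0 < j) (h3 : j ≤ k) : c2 n k j ∈ NN := by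
  refine le_iSup W 0 ?_
  exact Submodule.subset_span (Or.inl (Or.inr ⟨n, k, j, h1, h2, h3, rfl⟩))

lemma mem_beta (n k : ℕ) (h : n < k) : beta n k ∈ NN := by
  refine le_iSup W k ?_
  exact Submodule.subset_span (Or.inr ⟨n, k, h, le_refl k, rfl⟩)

/-! ### The map Θ and the key membership lemmas -/

noncomputable def Th (t : T) : R × R :=
  (∑ i ∈ Finset.range (aT t), ex (Xg ^ i)) +
  (∑ i ∈ Finset.range (bT t), ey (Xg ^ aT t * Yg ^ i)) +
  (∑ j ∈ Finset.range (cT t), ex (Xg ^ aT t * Yg ^ bT t * Xg ^ j))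

lemma ofR_sg (t : T) : ofR (sg t) = Xg ^ aT t * Yg ^ bT t * Xg ^ cT t := ofR_pows _ _ _

lemma aT_le_bT (t : T) : aT t ≤ bT t := by
  have h1 := t.lo_nonpos; have h2 := t.hi_nonneg
  simp [aT, bT]; omega

lemma cT_le_bT (t : T) : cT t ≤ bT t := by
  have h4 := t.en_le_hi; have h3 := t.lo_le_en
  simp [bT, cT]; omega

/-- Key membership: multiplying by `x`. -/
lemma Th_step_x (t : T) : Th (t * xT) - Th t - ex (ofR (sg t)) ∈ NN := by
  have h1 := t.lo_nonpos; have h2 := t.hi_nonneg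
  have h3 := t.lo_le_en; have h4 := t.en_le_hi
  rw [ofR_sg]
  by_cases hc : t.en < t.hi
  · have ea : aT (t * xT) = aT t := by simp [aT, xT]; omega
    have eb : bT (t * xT) = bT t := by simp [bT, xT]; omega
    have ec : cT (t * xT) = cT t + 1 := by simp [cT, xT]; omega
    rw [Th, Th, ea, eb, ec, Finset.sum_range_succ]
    have : (∑ i ∈ Finset.range (aT t), ex (Xg ^ i)) +
        (∑ i ∈ Finset.range (bT t), ey (Xg ^ aT t * Yg ^ i)) +
        ((∑ j ∈ Finset.range (cT t), ex (Xg ^ aT t * Yg ^ bT t * Xg ^ j)) +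
          ex (Xg ^ aT t * Yg ^ bT t * Xg ^ cT t)) -
        ((∑ i ∈ Finset.range (aT t), ex (Xg ^ i)) +
        (∑ i ∈ Finset.range (bT t), ey (Xg ^ aT t * Yg ^ i)) +
        (∑ j ∈ Finset.range (cT t), ex (Xg ^ aT t * Yg ^ bT t * Xg ^ j))) -
        ex (Xg ^ aT t * Yg ^ bT t * Xg ^ cT t) = 0 := by abel
    rw [this]
    exact Submodule.zero_mem _
  · have he : t.en = t.hi := by omega
    have hcb' : cT t = bT t := by simp [bT, cT]; omega
    have ea : aT (t * xT) = aT t + 1 := by simp [aT, xT]; omega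
    have eb : bT (t * xT) = bT t + 1 := by simp [bT, xT, he]; omega
    have ec : cT (t * xT) = bT t + 1 := by simp [cT, bT, xT, he]; omega
    rw [Th, Th, ea, eb, ec, hcb']
    set a := aT t; set b := bT t
    rw [Finset.sum_range_succ (fun i => ex ((Xg:R) ^ i)) a]
    by_cases hab : a < b
    · -- the difference is `-beta a b`
      have : (∑ i ∈ Finset.range a, ex (Xg ^ i)) + ex (Xg ^ a) +
          (∑ i ∈ Finset.range (b+1), ey (Xg ^ (a+1) * Yg ^ i)) +
          (∑ j ∈ Finset.range (b+1), ex (Xg ^ (a+1) * Yg ^ (b+1) * Xg ^ j)) -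
          ((∑ i ∈ Finset.range a, ex (Xg ^ i)) +
          (∑ i ∈ Finset.range b, ey (Xg ^ a * Yg ^ i)) +
          (∑ j ∈ Finset.range b, ex (Xg ^ a * Yg ^ b * Xg ^ j))) -
          ex (Xg ^ a * Yg ^ b * Xg ^ b) = -beta a b := by
        rw [beta]; abel
      rw [this]
      exact Submodule.neg_mem _ (mem_beta a b hab)
    · -- a = b : express via `c1`
      have hab' : a = b := le_antisymm (aT_le_bT t) (by omega)
      rw [← hab']
      have key : (∑ i ∈ Finset.range a, ex (Xg ^ i)) + ex (Xg ^ a) +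
          (∑ i ∈ Finset.range (a+1), ey (Xg ^ (a+1) * Yg ^ i)) +
          (∑ j ∈ Finset.range (a+1), ex (Xg ^ (a+1) * Yg ^ (a+1) * Xg ^ j)) -
          ((∑ i ∈ Finset.range a, ex (Xg ^ i)) +
          (∑ i ∈ Finset.range a, ey (Xg ^ a * Yg ^ i)) +
          (∑ j ∈ Finset.range a, ex (Xg ^ a * Yg ^ a * Xg ^ j))) -
          ex (Xg ^ a * Yg ^ a * Xg ^ a) =
          (∑ i ∈ Finset.range (a+1), c1 (a+1) (i+1)) - (∑ i ∈ Finset.range a, c1 a (i+1)) := by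
        have r1 : ∀ j ∈ Finset.range (a+1), ex ((Xg:R) ^ (a+1) * Yg ^ (a+1) * Xg ^ j)
            = ex (Xg ^ (a+1) * Yg ^ (a+1-j)) := by
          intro j hj
          rw [Rid4 (a+1) j (by have := Finset.mem_range.mp hj; omega)]
        have r2 : ∀ j ∈ Finset.range a, ex ((Xg:R) ^ a * Yg ^ a * Xg ^ j)
            = ex (Xg ^ a * Yg ^ (a-j)) := by
          intro j hj
          rw [Rid4 a j (by have := Finset.mem_range.mp hj; omega)]
        have r3 : ex ((Xg:R) ^ a * Yg ^ a * Xg ^ a) = ex (Xg ^ a) := by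
          rw [Rid4 a a le_rfl]; simp
        rw [Finset.sum_congr rfl r1, Finset.sum_congr rfl r2, r3]
        have refl1 : ∑ j ∈ Finset.range (a+1), ex ((Xg:R) ^ (a+1) * Yg ^ (a+1-j))
            = ∑ i ∈ Finset.range (a+1), ex ((Xg:R) ^ (a+1) * Yg ^ (i+1)) := by
          rw [← Finset.sum_range_reflect (fun i => ex ((Xg:R) ^ (a+1) * Yg ^ (i+1))) (a+1)]
          refine Finset.sum_congr rfl (fun j hj => ?_)
          have hjr := Finset.mem_range.mp hj
          rw [show a + 1 - 1 - j + 1 = a + 1 - j by omega]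
        have refl2 : ∑ j ∈ Finset.range a, ex ((Xg:R) ^ a * Yg ^ (a-j))
            = ∑ i ∈ Finset.range a, ex ((Xg:R) ^ a * Yg ^ (i+1)) := by
          rw [← Finset.sum_range_reflect (fun i => ex ((Xg:R) ^ a * Yg ^ (i+1))) a]
          refine Finset.sum_congr rfl (fun j hj => ?_)
          have hjr := Finset.mem_range.mp hj
          rw [show a - 1 - j + 1 = a - j by omega]
        rw [refl1, refl2]
        simp only [c1, show ∀ i:ℕ, i+1-1 = i from fun _ => rfl]
        rw [Finset.sum_add_distrib, Finset.sum_add_distrib]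
        abel
      rw [key]
      refine Submodule.sub_mem _ ?_ ?_ <;>
        refine Submodule.sum_mem _ (fun i hi => mem_c1 _ _ (by omega) (by
          have := Finset.mem_range.mp hi; omega))

/-- Key membership: multiplying by `y`. -/
lemma Th_step_y (t : T) : Th (t * yT) - Th t - ey (ofR (sg t)) ∈ NN := by
  have h1 := t.lo_nonpos; have h2 := t.hi_nonneg
  have h3 := t.lo_le_en; have h4 := t.en_le_hi
  rw [ofR_sg]
  by_cases hc : t.lo < t.en
  · have ea : aT (t * yT) = aT t := by simp [aT, yT]; omega
    have eb : bT (t * yT) = bT t := by simp [bT, yT]; omega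
    have ec : cT (t * yT) = cT t - 1 := by simp [cT, yT]; omega
    have hc1 : 1 ≤ cT t := by simp [cT]; omega
    obtain ⟨c', hc'⟩ : ∃ c', cT t = c' + 1 := ⟨cT t - 1, by omega⟩
    rw [Th, Th, ea, eb, ec, hc', show c' + 1 - 1 = c' from rfl, Finset.sum_range_succ]
    set a := aT t; set b := bT t
    have hd : (∑ i ∈ Finset.range a, ex (Xg ^ i)) +
        (∑ i ∈ Finset.range b, ey (Xg ^ a * Yg ^ i)) +
        (∑ j ∈ Finset.range c', ex (Xg ^ a * Yg ^ b * Xg ^ j)) -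
        ((∑ i ∈ Finset.range a, ex (Xg ^ i)) +
        (∑ i ∈ Finset.range b, ey (Xg ^ a * Yg ^ i)) +
        ((∑ j ∈ Finset.range c', ex (Xg ^ a * Yg ^ b * Xg ^ j)) +
          ex (Xg ^ a * Yg ^ b * Xg ^ c'))) -
        ey (Xg ^ a * Yg ^ b * Xg ^ (c'+1)) =
        -(ex (Xg ^ a * Yg ^ b * Xg ^ c') + ey (Xg ^ a * Yg ^ b * Xg ^ (c'+1))) := by abel
    rw [hd]
    have hcb : c' + 1 ≤ b := by have := cT_le_bT t; omega
    by_cases hab : a < b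
    · have : ex ((Xg:R) ^ a * Yg ^ b * Xg ^ c') + ey (Xg ^ a * Yg ^ b * Xg ^ (c'+1))
          = c2 a b (c'+1) := by
        rw [c2, show c' + 1 - 1 = c' from rfl]
      rw [this]
      exact Submodule.neg_mem _ (mem_c2 a b (c'+1) hab (by omega) hcb)
    · have hab' : a = b := le_antisymm (aT_le_bT t) (by omega)
      rw [← hab'] at hcb ⊢
      have hx : ex ((Xg:R) ^ a * Yg ^ a * Xg ^ c') = ex (Xg ^ a * Yg ^ (a - c')) := by
        rw [Rid4 a c' (by omega)]
      have hy : ey ((Xg:R) ^ a * Yg ^ a * Xg ^ (c'+1)) = ey (Xg ^ a * Yg ^ (a - (c'+1))) := by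
        rw [Rid4 a (c'+1) (by omega)]
      rw [hx, hy]
      have : ex ((Xg:R) ^ a * Yg ^ (a - c')) + ey (Xg ^ a * Yg ^ (a - (c'+1)))
          = c1 a (a - c') := by
        rw [c1, show a - c' - 1 = a - (c'+1) by omega]
        abel
      rw [this]
      exact Submodule.neg_mem _ (mem_c1 a (a - c') (by omega) (by omega))
  · have he : t.en = t.lo := by omega
    have hc0 : cT t = 0 := by simp [cT]; omega
    have ea : aT (t * yT) = aT t := by simp [aT, yT]; omega
    have eb : bT (t * yT) = bT t + 1 := by simp [bT, yT]; omega
    have ec : cT (t * yT) = 0 := by simp [cT, yT]; omega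
    rw [Th, Th, ea, eb, ec, hc0, Finset.sum_range_succ]
    have hz : ((Xg:R) ^ aT t * Yg ^ bT t * Xg ^ (0:ℕ)) = Xg ^ aT t * Yg ^ bT t := by simp
    rw [hz]
    have : (∑ i ∈ Finset.range (aT t), ex (Xg ^ i)) +
        ((∑ i ∈ Finset.range (bT t), ey (Xg ^ aT t * Yg ^ i)) +
          ey (Xg ^ aT t * Yg ^ bT t)) +
        (∑ j ∈ Finset.range 0, ex (Xg ^ aT t * Yg ^ (bT t + 1) * Xg ^ j)) -
        ((∑ i ∈ Finset.range (aT t), ex (Xg ^ i)) +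
        (∑ i ∈ Finset.range (bT t), ey (Xg ^ aT t * Yg ^ i)) +
        (∑ j ∈ Finset.range 0, ex (Xg ^ aT t * Yg ^ bT t * Xg ^ j))) -
        ey (Xg ^ aT t * Yg ^ bT t) = 0 := by abel
    rw [this]
    exact Submodule.zero_mem _

/-! ### The retraction and conclusion -/

noncomputable def QN := (R × R) ⧸ NN

noncomputable instance : AddCommGroup QN := by unfold QN; infer_instance
noncomputable instance : Module ℤ QN := by unfold QN; infer_instance

/-- The ℤ-linear "potential" map `R → (R×R)/N`. -/
noncomputable def tau : R →ₗ[ℤ] QN :=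
  (Finsupp.lift QN ℤ FIM1) (fun m => NN.mkQ (Th (normT m))) ∘ₗ
    (MonoidAlgebra.coeffLinearEquiv ℤ).toLinearMap

lemma tau_single (m : FIM1) : tau (MonoidAlgebra.single m 1) = NN.mkQ (Th (normT m)) := by
  have h : tau (MonoidAlgebra.single m 1) =
      (Finsupp.single m (1:ℤ)).sum fun x r => r • NN.mkQ (Th (normT x)) := rfl
  rw [h, Finsupp.sum_single_index (by simp), one_smul]

lemma single_eq_ofR (m : FIM1) : MonoidAlgebra.single m (1:ℤ) = ofR m := by
  simp [ofR, MonoidAlgebra.of_apply]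

lemma key_ex (m : FIM1) : tau (d1 (ex (MonoidAlgebra.single m 1))) =
    NN.mkQ (ex (MonoidAlgebra.single m 1)) := by
  rw [d1_ex]
  have hXg : (MonoidAlgebra.single m (1:ℤ)) * Xg = MonoidAlgebra.single (m * mx) 1 := by
    rw [show Xg = MonoidAlgebra.single mx (1:ℤ) from rfl, MonoidAlgebra.single_mul_single,
      mul_one]
  rw [hXg, map_sub, tau_single, tau_single]
  have hnorm : normT (m * mx) = normT m * xT := by rw [map_mul, normT_mx]
  rw [hnorm]
  have hmem := Th_step_x (normT m)
  rw [ofR_sg, ← ofR_sg, sg_norm, ← single_eq_ofR] at hmem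
  have h0 : NN.mkQ (Th (normT m * xT)) - NN.mkQ (Th (normT m))
      - NN.mkQ (ex (MonoidAlgebra.single m 1)) = 0 := by
    rw [← map_sub, ← map_sub]
    simpa using (Submodule.Quotient.mk_eq_zero NN).mpr hmem
  exact sub_eq_zero.mp h0

lemma key_ey (m : FIM1) : tau (d1 (ey (MonoidAlgebra.single m 1))) =
    NN.mkQ (ey (MonoidAlgebra.single m 1)) := by
  rw [d1_ey]
  have hYg : (MonoidAlgebra.single m (1:ℤ)) * Yg = MonoidAlgebra.single (m * my) 1 := by
    rw [show Yg = MonoidAlgebra.single my (1:ℤ) from rfl, MonoidAlgebra.single_mul_single,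
      mul_one]
  rw [hYg, map_sub, tau_single, tau_single]
  have hnorm : normT (m * my) = normT m * yT := by rw [map_mul, normT_my]
  rw [hnorm]
  have hmem := Th_step_y (normT m)
  rw [ofR_sg, ← ofR_sg, sg_norm, ← single_eq_ofR] at hmem
  have h0 : NN.mkQ (Th (normT m * yT)) - NN.mkQ (Th (normT m))
      - NN.mkQ (ey (MonoidAlgebra.single m 1)) = 0 := by
    rw [← map_sub, ← map_sub]
    simpa using (Submodule.Quotient.mk_eq_zero NN).mpr hmem
  exact sub_eq_zero.mp h0

lemma ex_add (p q : R) : ex (p + q) = ex p + ex q := by simp [ex]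
lemma ey_add (p q : R) : ey (p + q) = ey p + ey q := by simp [ey]

lemma tau_d1_ex (p : R) : tau (d1 (ex p)) = NN.mkQ (ex p) := by
  induction p using MonoidAlgebra.induction_linear with
  | zero => rw [show ex (0:R) = 0 from rfl]; simp; rfl
  | add p q ihp ihq => rw [ex_add, map_add, map_add, map_add, ihp, ihq]; rfl
  | single m r =>
      have hex : ex (MonoidAlgebra.single m r) = r • ex (MonoidAlgebra.single m 1) := by
        have hr : MonoidAlgebra.single m r = r • MonoidAlgebra.single m (1:ℤ) := by
          rw [MonoidAlgebra.smul_single, smul_eq_mul, mul_one]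
        rw [hr]; simp [ex]
      rw [hex, map_zsmul, map_zsmul, map_zsmul, key_ex m]; rfl

lemma tau_d1_ey (p : R) : tau (d1 (ey p)) = NN.mkQ (ey p) := by
  induction p using MonoidAlgebra.induction_linear with
  | zero => rw [show ey (0:R) = 0 from rfl]; simp; rfl
  | add p q ihp ihq => rw [ey_add, map_add, map_add, map_add, ihp, ihq]; rfl
  | single m r =>
      have hey : ey (MonoidAlgebra.single m r) = r • ey (MonoidAlgebra.single m 1) := by
        have hr : MonoidAlgebra.single m r = r • MonoidAlgebra.single m (1:ℤ) := by
          rw [MonoidAlgebra.smul_single, smul_eq_mul, mul_one]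
        rw [hr]; simp [ey]
      rw [hey, map_zsmul, map_zsmul, map_zsmul, key_ey m]; rfl

lemma tau_d1 (v : R × R) : tau (d1 v) = NN.mkQ v := by
  obtain ⟨p, q⟩ := v
  have hv : ((p, q) : R × R) = ex p + ey q := by simp [ex, ey]
  rw [hv, map_add, map_add, map_add, tau_d1_ex, tau_d1_ey]; rfl

/-- Each `W K` is contained in the kernel. -/
lemma W_le_ker (K : ℕ) : W K ≤ (LinearMap.ker d1).restrictScalars ℤ := by
  rw [W, Submodule.span_le]
  rintro v ((⟨n, k, h1, h2, rfl⟩ | ⟨n, k, j, h1, h2, h3, rfl⟩) | ⟨n, k, h1, h2, rfl⟩) <;>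
    simp only [SetLike.mem_coe, Submodule.restrictScalars_mem, LinearMap.mem_ker]
  · exact d1_c1 n k h1 h2
  · exact d1_c2 n k j h2 h3
  · exact d1_beta n k (le_of_lt h1)

/-- The union of the chain `W₀ ⊆ W₁ ⊆ W₂ ⊆ ⋯` is the kernel of `d₁`. -/
theorem union_W_eq_ker_d1 :
    (⋃ K : ℕ, (W K : Set (R × R))) = (LinearMap.ker d1 : Set (R × R)) := by
  ext v
  simp only [Set.mem_iUnion, SetLike.mem_coe, LinearMap.mem_ker]
  constructor
  · rintro ⟨K, hK⟩
    have := W_le_ker K hK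
    rwa [Submodule.restrictScalars_mem, LinearMap.mem_ker] at this
  · intro hv
    have h := tau_d1 v
    rw [hv, map_zero] at h
    have hvN : v ∈ NN := by
      have h' : NN.mkQ v = 0 := h.symm
      rw [Submodule.mkQ_apply, Submodule.Quotient.mk_eq_zero] at h'
      exact h'
    rw [NN, Submodule.mem_iSup_of_directed _ (W_mono.directed_le)] at hvN
    exact hvN
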